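/- arXiv:1606.05237 — 4 statements merged into one kernel-verified Lean document; each statement's English description precedes it below -/
import Mathlib

section
/- For 0 < α < β with m-1 < α < m (m ∈ ℕ), the Riemann-Liouville fractional difference satisfies Δ^α k^β(n) = k^{β-α}(n+m) for all n ∈ ℕ₀. -/
noncomputable def kk (β : ℝ) (n : ℕ) : ℝ :=
  Real.Gamma (β + n) / (Real.Gamma β * Real.Gamma (n + 1))

def fwd (u : ℕ → ℝ) : ℕ → ℝ := fun n => u (n + 1) - u n

/-- Fractional sum of order `γ > 0`. -/
noncomputable def fsum (γ : ℝ) (u : ℕ → ℝ) : ℕ → ℝ :=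
  fun n => ∑ j ∈ Finset.range (n + 1), kk γ (n - j) * u j

/-!
For orders `β` that are not nonpositive integers, `k^β(n) = β(β+1)⋯(β+n-1)/n!` is the
multiset coefficient `multichoose β n`. Fractional summation is then convolution of such
coefficients, which by Chu–Vandermonde gives `Δ^{-(m-α)} k^β = multichoose (β - α + m)`, and
Pascal's rule `Δ multichoose (r + 1) n = multichoose r (n + 1)`, applied `m` times, lowers the
order by `m` and shifts the index by `m`.
-/

open Finset Polynomial

theorem Ring.multichoose_add {R : Type*} [CommRing R] [BinomialRing R] (r s : R) (n : ℕ) :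
    Ring.multichoose (r + s) n =
      ∑ ij ∈ antidiagonal n, Ring.multichoose r ij.1 * Ring.multichoose s ij.2 := by
  -- `choose (-r) n = (-1)^n multichoose r n` turns Chu–Vandermonde for `choose` into this.
  have key := Ring.add_choose_eq (r := -r) (s := -s) n (Commute.all _ _)
  rw [← neg_add, Ring.choose_neg'] at key
  simp only [Ring.choose_neg', smul_mul_smul_comm] at key
  rw [sum_congr rfl fun ij hij => by
    rw [← Int.negOnePow_add, ← Nat.cast_add, mem_antidiagonal.mp hij], ← smul_sum] at key
  exact smul_left_cancel_iff _ |>.mp key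

theorem Real.Gamma_add_nat_eq_ascPochhammer_eval_mul {s : ℝ} (hs : ∀ m : ℕ, s ≠ -m) (n : ℕ) :
    Real.Gamma (s + n) = (ascPochhammer ℝ n).eval s * Real.Gamma s := by
  induction n with
  | zero => simp
  | succ n ih =>
    have hsn : s + n ≠ 0 := fun h => hs n (eq_neg_of_add_eq_zero_left h)
    rw [Nat.cast_succ, ← add_assoc, Real.Gamma_add_one hsn, ih, ascPochhammer_succ_eval]
    ring

theorem Ring.multichoose_eq_ascPochhammer_eval_div {K : Type*} [Field K] [CharZero K] (r : K)
    (n : ℕ) : Ring.multichoose r n = (ascPochhammer K n).eval r / n.factorial := by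
  rw [eq_div_iff (Nat.cast_ne_zero.mpr n.factorial_ne_zero), ← ascPochhammer_smeval_eq_eval,
    ← Ring.factorial_nsmul_multichoose_eq_ascPochhammer, nsmul_eq_mul, mul_comm]

theorem kk_eq_multichoose {β : ℝ} (hβ : ∀ m : ℕ, β ≠ -m) (n : ℕ) :
    kk β n = Ring.multichoose β n := by
  rw [kk, Real.Gamma_add_nat_eq_ascPochhammer_eval_mul hβ, Real.Gamma_nat_eq_factorial,
    Ring.multichoose_eq_ascPochhammer_eval_div, mul_comm (Real.Gamma β),
    mul_div_mul_right _ _ (Real.Gamma_ne_zero hβ)]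

theorem fsum_kk {γ β : ℝ} (hγ : ∀ m : ℕ, γ ≠ -m) (hβ : ∀ m : ℕ, β ≠ -m) :
    fsum γ (kk β) = Ring.multichoose (γ + β) := by
  ext n
  rw [fsum, add_comm γ β, Ring.multichoose_add,
    Nat.sum_antidiagonal_eq_sum_range_succ fun i j => Ring.multichoose β i * Ring.multichoose γ j]
  exact sum_congr rfl fun j _ => by rw [kk_eq_multichoose hγ, kk_eq_multichoose hβ, mul_comm]

theorem iterate_fwd_multichoose (j : ℕ) (r : ℝ) :
    fwd^[j] (Ring.multichoose (r + j)) = fun n ↦ Ring.multichoose r (n + j) := by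
  induction j generalizing r with
  | zero => simp
  | succ j ih =>
    rw [Function.iterate_succ_apply', Nat.cast_succ, add_comm (j : ℝ), ← add_assoc, ih]
    ext n
    rw [fwd, ← add_assoc, add_right_comm, Ring.multichoose_succ_succ, add_sub_cancel_right]

theorem ne_neg_natCast_of_pos {s : ℝ} (hs : 0 < s) (m : ℕ) : s ≠ -m :=
  ((neg_nonpos.mpr m.cast_nonneg).trans_lt hs).ne'

theorem stmt5_general (α β : ℝ) (m : ℕ) (h0 : 0 < α) (hαβ : α < β)
    (h2 : α < m) (n : ℕ) :
    fwd^[m] (fsum ((m : ℝ) - α) (kk β)) n = kk (β - α) (n + m) := by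
  rw [fsum_kk (ne_neg_natCast_of_pos (sub_pos.mpr h2)) (ne_neg_natCast_of_pos (h0.trans hαβ)),
    show (m : ℝ) - α + β = β - α + m by ring, iterate_fwd_multichoose,
    kk_eq_multichoose (ne_neg_natCast_of_pos (sub_pos.mpr hαβ))]

theorem stmt5 (α β : ℝ) (m : ℕ) (hm : 1 ≤ m) (h0 : 0 < α) (hαβ : α < β)
    (h1 : (m : ℝ) - 1 < α) (h2 : α < m) (n : ℕ) :
    fwd^[m] (fsum ((m : ℝ) - α) (kk β)) n = kk (β - α) (n + m) :=
  stmt5_general α β m h0 hαβ h2 n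
end

section
/- Let 1 < α < 2 and u : ℕ₀ → X a sequence in a Banach space X. Then the Caputo and Riemann-Liouville fractional differences satisfy: C Δ^α u(n) = Δ^α u(n) - k^{2-α}(n+1)[u(1) - 2u(0)] - k^{2-α}(n+2)u(0) for all n ∈ ℕ₀. -/
variable {X : Type*} [NormedAddCommGroup X] [NormedSpace ℝ X]

/-- Fractional sum of order `γ` of a vector-valued sequence. -/
noncomputable def fsumX (γ : ℝ) (u : ℕ → X) : ℕ → X :=
  fun n => ∑ j ∈ Finset.range (n + 1), kk γ (n - j) • u j

/-- Second order forward difference. -/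
def delta2 (u : ℕ → X) : ℕ → X := fun n => u (n + 2) - (2 : ℝ) • u (n + 1) + u n

theorem fsumX_succ (γ : ℝ) (u : ℕ → X) (n : ℕ) :
    fsumX γ u (n + 1) = fsumX γ (fun j => u (j + 1)) n + kk γ (n + 1) • u 0 := by
  simp [fsumX, Finset.sum_range_succ' _ (n + 1)]

theorem fsumX_add_two (γ : ℝ) (u : ℕ → X) (n : ℕ) :
    fsumX γ u (n + 2) = fsumX γ (fun j => u (j + 2)) n
      + kk γ (n + 1) • u 1 + kk γ (n + 2) • u 0 := by
  rw [fsumX_succ, fsumX_succ, add_assoc]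

theorem fsumX_delta2 (γ : ℝ) (u : ℕ → X) (n : ℕ) :
    fsumX γ (delta2 u) n = fsumX γ (fun j => u (j + 2)) n
      - (2 : ℝ) • fsumX γ (fun j => u (j + 1)) n + fsumX γ u n := by
  simp only [fsumX, delta2, smul_add, smul_sub, smul_comm (kk γ _) (2 : ℝ),
    Finset.sum_add_distrib, Finset.sum_sub_distrib, Finset.smul_sum]

theorem stmt6_general (α : ℝ) (u : ℕ → X) (n : ℕ) :
    fsumX (2 - α) (delta2 u) n =
      delta2 (fsumX (2 - α) u) n
        - kk (2 - α) (n + 1) • (u 1 - (2 : ℝ) • u 0)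
        - kk (2 - α) (n + 2) • u 0 := by
  rw [fsumX_delta2, delta2, fsumX_add_two, fsumX_succ]
  module

theorem stmt6 (α : ℝ) (hα1 : 1 < α) (hα2 : α < 2) (u : ℕ → X) (n : ℕ) :
    fsumX (2 - α) (delta2 u) n =
      delta2 (fsumX (2 - α) u) n
        - kk (2 - α) (n + 1) • (u 1 - (2 : ℝ) • u 0)
        - kk (2 - α) (n + 2) • u 0 :=
  stmt6_general α u n
end

section
/- For m, n ∈ ℕ₀ and t ≥ 0, the m-th forward difference in n of the Poisson kernel satisfies Δ^m p_n(t) = (-1)^m p_{n+m}^{(m)}(t), i.e., ∑_{j=0}^m C(m,j)(-1)^{m-j} p_{n+j}(t) = (-1)^m (d/dt)^m [e^{-t} t^{n+m}/(n+m)!]. -/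
noncomputable def poi (n : ℕ) (t : ℝ) : ℝ := Real.exp (-t) * t ^ n / n.factorial

/-!
Differentiation lowers the index of the Poisson kernel: `p_{k+1}' = p_k - p_{k+1} = -Δ p_k`.
Induction on `m` then gives `Δ^m p_n(t) = (-1)^m p_{n+m}^{(m)}(t)`, and the left-hand side of
the theorem is the binomial expansion of `Δ^m` in terms of shifts.
-/

open scoped fwdDiff

theorem contDiff_poi (n : ℕ) {k : WithTop ℕ∞} : ContDiff ℝ k (poi n) :=
  ((Real.contDiff_exp.comp contDiff_neg).mul (contDiff_id.pow n)).div_const _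

theorem hasDerivAt_poi_succ (n : ℕ) (t : ℝ) :
    HasDerivAt (poi (n + 1)) (poi n t - poi (n + 1) t) t := by
  have hexp : HasDerivAt (fun t : ℝ => Real.exp (-t)) (-Real.exp (-t)) t := by
    simpa using (hasDerivAt_neg t).exp
  refine ((hexp.mul (hasDerivAt_pow (n + 1) t)).div_const ((n + 1).factorial : ℝ)).congr_deriv ?_
  simp only [poi, Nat.factorial_succ, Nat.cast_mul, Nat.add_sub_cancel]
  field_simp
  push_cast
  ring

theorem deriv_poi_succ (n : ℕ) : deriv (poi (n + 1)) = poi n - poi (n + 1) :=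
  funext fun t => (hasDerivAt_poi_succ n t).deriv

theorem fwdDiff_iter_poi (m n : ℕ) (t : ℝ) :
    (Δ_[1])^[m] (poi · t) n = (-1) ^ m * iteratedDeriv m (poi (n + m)) t := by
  induction m generalizing n with
  | zero => simp
  | succ m ih =>
    have hderiv : deriv (poi (n + (m + 1))) = poi (n + m) - poi (n + 1 + m) := by
      rw [← add_assoc, deriv_poi_succ, add_right_comm]
    rw [Function.iterate_succ_apply', fwdDiff, ih, ih, iteratedDeriv_succ', hderiv,
      iteratedDeriv_sub (contDiff_poi _).contDiffAt (contDiff_poi _).contDiffAt]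
    ring

theorem stmt11_general (m n : ℕ) (t : ℝ) :
    ∑ j ∈ Finset.range (m + 1), (m.choose j : ℝ) * (-1 : ℝ) ^ (m - j) * poi (n + j) t =
      (-1 : ℝ) ^ m * iteratedDeriv m (poi (n + m)) t := by
  rw [← fwdDiff_iter_poi, fwdDiff_iter_eq_sum_shift]
  refine Finset.sum_congr rfl fun j _ => ?_
  simp only [nsmul_one, Nat.cast_id, zsmul_eq_mul]
  push_cast
  ring

theorem stmt11 (m n : ℕ) (t : ℝ) (ht : 0 ≤ t) :
    ∑ j ∈ Finset.range (m + 1), (m.choose j : ℝ) * (-1 : ℝ) ^ (m - j) * poi (n + j) t =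
      (-1 : ℝ) ^ m * iteratedDeriv m (poi (n + m)) t :=
  stmt11_general m n t
end

section
/- The Poisson transformation is multiplicative with respect to convolution: for a ∈ L¹(ℝ₊) and ψ ∈ L¹(ℝ₊; X), P(a∗ψ)(n) = (P(a) * P(ψ))(n) for all n ∈ ℕ₀, where ∗ is the continuous convolution on ℝ₊ and * the finite discrete convolution. -/
open MeasureTheory

/-!
Substituting `t = u + s` turns the triangle `0 < s < t` of the left-hand side into the quadrant
`u, s > 0`, with integrand `poi n (u + s) • (a u • ψ s)`. By the binomial theorem
`poi n (u + s) = ∑ j, poi (n - j) u * poi j s`, so the integrand is a finite sum of functions of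
the form `f u • g s`, each of which integrates to `(∫ f) • ∫ g` by Fubini. Integrability is free,
since `0 ≤ poi j ≤ 1` on `[0, ∞)`.
-/

open Set

theorem setIntegral_Ioi_prod_Ioi_eq_integral_intervalIntegral {E : Type*} [NormedAddCommGroup E]
    [NormedSpace ℝ E] {F : ℝ × ℝ → E} (hF : IntegrableOn F (Ioi 0 ×ˢ Ioi 0)) :
    ∫ z in Ioi 0 ×ˢ Ioi 0, F z = ∫ t in Ioi 0, ∫ s in (0 : ℝ)..t, F (t - s, s) := by
  set Φ : ℝ × ℝ → ℝ × ℝ := fun z => (z.1 - z.2, z.2)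
  have hΦ : MeasurePreserving Φ volume volume := measurePreserving_sub_prod volume volume
  have hΦe : MeasurableEmbedding Φ := by
    refine .of_measurable_inverse (g := fun z => (z.1 + z.2, z.2)) (by fun_prop) ?_ (by fun_prop)
      fun z => by simp [Φ]
    rw [range_eq_univ.2 fun z => ⟨(z.1 + z.2, z.2), by simp [Φ]⟩]
    exact .univ
  set T : Set (ℝ × ℝ) := {z | 0 < z.2 ∧ z.2 < z.1}
  have hT : Φ ⁻¹' (Ioi 0 ×ˢ Ioi 0) = T := by
    ext z; simp [Φ, T, and_comm]
  have hTm : MeasurableSet T := by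
    rw [← hT]; exact (measurableSet_Ioi.prod measurableSet_Ioi).preimage hΦe.measurable
  have hFΦ : Integrable (T.indicator fun z => F (Φ z)) (volume.prod volume) := by
    rw [integrable_indicator_iff hTm, ← hT]
    exact (hΦ.integrableOn_comp_preimage hΦe).2 hF
  have hsection : ∀ t, (fun s => T.indicator (fun z => F (Φ z)) (t, s)) =
      (Ioo 0 t).indicator fun s => F (t - s, s) := by
    intro t; ext s
    by_cases hs : s ∈ Ioo 0 t <;> simp_all [T, Φ]
  calc ∫ z in Ioi 0 ×ˢ Ioi 0, F z = ∫ z in T, F (Φ z) := by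
        rw [← hT, hΦ.setIntegral_preimage_emb hΦe]
    _ = ∫ t, ∫ s in Ioo 0 t, F (t - s, s) := by
        rw [← integral_indicator hTm, Measure.volume_eq_prod, integral_prod _ hFΦ]
        simp_rw [hsection, integral_indicator measurableSet_Ioo]
    _ = ∫ t in Ioi 0, ∫ s in Ioo 0 t, F (t - s, s) := by
        refine (setIntegral_eq_integral_of_forall_compl_eq_zero fun t ht => ?_).symm
        rw [Ioo_eq_empty (by simpa using ht), Measure.restrict_empty, integral_zero_measure]
    _ = ∫ t in Ioi 0, ∫ s in (0 : ℝ)..t, F (t - s, s) := by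
        refine setIntegral_congr_fun measurableSet_Ioi fun t ht => ?_
        rw [intervalIntegral.integral_of_le (le_of_lt ht), integral_Ioc_eq_integral_Ioo]

theorem poi_nonneg (n : ℕ) {t : ℝ} (ht : 0 ≤ t) : 0 ≤ poi n t := by
  unfold poi
  positivity

theorem poi_le_one (n : ℕ) {t : ℝ} (ht : 0 ≤ t) : poi n t ≤ 1 := by
  rw [poi, mul_div_assoc, Real.exp_neg, inv_mul_le_one₀ (Real.exp_pos t)]
  exact Real.pow_div_factorial_le_exp _ ht n

theorem MeasureTheory.IntegrableOn.poi_smul {E : Type*} [NormedAddCommGroup E] [NormedSpace ℝ E]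
    {f : ℝ → E} (hf : IntegrableOn f (Ioi 0)) (n : ℕ) :
    IntegrableOn (fun t => poi n t • f t) (Ioi 0) := by
  refine hf.bdd_smul 1 (by unfold poi; fun_prop) ?_
  refine ae_restrict_of_forall_mem measurableSet_Ioi fun t ht => ?_
  rw [Real.norm_of_nonneg (poi_nonneg n (le_of_lt ht))]
  exact poi_le_one n (le_of_lt ht)

theorem poi_add (n : ℕ) (u s : ℝ) :
    poi n (u + s) = ∑ j ∈ Finset.range (n + 1), poi (n - j) u * poi j s := by
  simp only [poi, add_comm u s, add_pow, neg_add, Real.exp_add, Finset.mul_sum, Finset.sum_div]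
  refine Finset.sum_congr rfl fun j hj => ?_
  have hfac : (n.choose j * j.factorial * (n - j).factorial : ℝ) = n.factorial := by
    exact_mod_cast Nat.choose_mul_factorial_mul_factorial (Finset.mem_range_succ_iff.1 hj)
  field_simp
  linear_combination (s ^ j * u ^ (n - j)) * hfac

section PoissonConvolution

variable {E : Type*} [NormedAddCommGroup E] [NormedSpace ℝ E] {a : ℝ → ℝ} {ψ : ℝ → E}

theorem poi_add_smul_eq_sum (n : ℕ) (u s : ℝ) :
    poi n (u + s) • (a u • ψ s) =
      ∑ j ∈ Finset.range (n + 1), (poi (n - j) u * a u) • (poi j s • ψ s) := by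
  rw [poi_add, Finset.sum_smul]
  refine Finset.sum_congr rfl fun j _ => ?_
  rw [smul_smul, smul_smul]
  congr 1
  ring

theorem integrable_poi_mul_smul_poi_smul (ha : IntegrableOn a (Ioi 0))
    (hψ : IntegrableOn ψ (Ioi 0)) (m j : ℕ) :
    Integrable (fun z : ℝ × ℝ => (poi m z.1 * a z.1) • (poi j z.2 • ψ z.2))
      ((volume.restrict (Ioi 0)).prod (volume.restrict (Ioi 0))) :=
  (ha.poi_smul m).smul_prod (hψ.poi_smul j)

theorem integrableOn_poi_add_smul (ha : IntegrableOn a (Ioi 0)) (hψ : IntegrableOn ψ (Ioi 0))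
    (n : ℕ) :
    IntegrableOn (fun z : ℝ × ℝ => poi n (z.1 + z.2) • (a z.1 • ψ z.2)) (Ioi 0 ×ˢ Ioi 0) := by
  rw [IntegrableOn, Measure.volume_eq_prod, ← Measure.prod_restrict]
  simp_rw [poi_add_smul_eq_sum]
  exact integrable_finsetSum _ fun j _ => integrable_poi_mul_smul_poi_smul ha hψ (n - j) j

theorem setIntegral_poi_add_smul (ha : IntegrableOn a (Ioi 0)) (hψ : IntegrableOn ψ (Ioi 0))
    (n : ℕ) :
    ∫ z in Ioi 0 ×ˢ Ioi 0, poi n (z.1 + z.2) • (a z.1 • ψ z.2) =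
      ∑ j ∈ Finset.range (n + 1),
        (∫ t in Ioi 0, poi (n - j) t * a t) • ∫ t in Ioi 0, poi j t • ψ t := by
  rw [Measure.volume_eq_prod, ← Measure.prod_restrict]
  simp_rw [poi_add_smul_eq_sum]
  rw [integral_finsetSum _ fun j _ => integrable_poi_mul_smul_poi_smul ha hψ (n - j) j]
  exact Finset.sum_congr rfl fun j _ =>
    integral_prod_smul (fun t => poi (n - j) t * a t) (fun t => poi j t • ψ t)

end PoissonConvolution

theorem stmt14_general (X : Type*) [NormedAddCommGroup X] [NormedSpace ℝ X]
    (a : ℝ → ℝ) (ψ : ℝ → X)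
    (ha : IntegrableOn a (Set.Ioi 0)) (hψ : IntegrableOn ψ (Set.Ioi 0)) (n : ℕ) :
    (∫ t in Set.Ioi (0 : ℝ), poi n t • (∫ s in (0 : ℝ)..t, a (t - s) • ψ s)) =
      ∑ j ∈ Finset.range (n + 1),
        (∫ t in Set.Ioi (0 : ℝ), poi (n - j) t * a t) •
          (∫ t in Set.Ioi (0 : ℝ), poi j t • ψ t) := by
  calc (∫ t in Ioi (0 : ℝ), poi n t • (∫ s in (0 : ℝ)..t, a (t - s) • ψ s))
      _ = ∫ t in Ioi 0, ∫ s in (0 : ℝ)..t, poi n (t - s + s) • (a (t - s) • ψ s) := by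
        refine setIntegral_congr_fun measurableSet_Ioi fun t _ => ?_
        simp_rw [sub_add_cancel, intervalIntegral.integral_smul]
      _ = ∫ z in Ioi 0 ×ˢ Ioi 0, poi n (z.1 + z.2) • (a z.1 • ψ z.2) :=
        (setIntegral_Ioi_prod_Ioi_eq_integral_intervalIntegral
          (integrableOn_poi_add_smul ha hψ n)).symm
      _ = _ := setIntegral_poi_add_smul ha hψ n

theorem stmt14 (X : Type*) [NormedAddCommGroup X] [NormedSpace ℝ X] [CompleteSpace X]
    (a : ℝ → ℝ) (ψ : ℝ → X)
    (ha : IntegrableOn a (Set.Ioi 0)) (hψ : IntegrableOn ψ (Set.Ioi 0)) (n : ℕ) :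
    (∫ t in Set.Ioi (0 : ℝ), poi n t • (∫ s in (0 : ℝ)..t, a (t - s) • ψ s)) =
      ∑ j ∈ Finset.range (n + 1),
        (∫ t in Set.Ioi (0 : ℝ), poi (n - j) t * a t) •
          (∫ t in Set.Ioi (0 : ℝ), poi j t • ψ t) :=
  stmt14_general X a ψ ha hψ n
end
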